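/- Let G be a connected weighted graph, s,t vertices, and ε > 0. Let H₀ be a subgraph of G with d_{H₀}(s,t) > d_G(s,t) + (2+ε)·W(s,t), and let H₁ be H₀ together with all edges of π(s,t). Let a, y, b be vertices appearing in this order along π(s,t) such that d_{H₀}(s,a) = d_G(s,a) and d_{H₀}(b,t) = d_G(b,t), and let x be a vertex joined in H₀ to y by an edge of weight at most W(s,t). Then: (1) d_{H₁}(a,x) ≤ d_G(a,x) + 2·W(s,t) and d_{H₁}(b,x) ≤ d_G(b,x) + 2·W(s,t); and (2) d_{H₀}(a,x) − d_{H₁}(a,x) > ε·W(s,t)/2 or d_{H₀}(b,x) − d_{H₁}(b,x) > ε·W(s,t)/2. -/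

import Mathlib

open scoped ENNReal Classical

/-- The total weight of a walk: the sum of the weights of its edges. -/
noncomputable def walkWeight {V : Type} (G : SimpleGraph V) (w : Sym2 V → ℝ≥0∞)
    {s t : V} (p : G.Walk s t) : ℝ≥0∞ :=
  (p.edges.map w).sum

/-- Shortest-path distance in the weighted graph `(G, w)`, equal to `⊤` if there is no path. -/
noncomputable def gdist {V : Type} (G : SimpleGraph V) (w : Sym2 V → ℝ≥0∞)
    (s t : V) : ℝ≥0∞ :=
  ⨅ p : G.Walk s t, walkWeight G w p

/-- The maximum edge weight along a walk (0 for the trivial walk). -/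
noncomputable def maxEdge {V : Type} (G : SimpleGraph V) (w : Sym2 V → ℝ≥0∞)
    {s t : V} (p : G.Walk s t) : ℝ≥0∞ :=
  (p.edges.map w).foldr max 0

/-- `π` assigns to each ordered vertex pair a shortest path: a walk whose total
weight equals the shortest-path distance. -/
def IsShortestPathScheme {V : Type} (G : SimpleGraph V) (w : Sym2 V → ℝ≥0∞)
    (π : (s t : V) → G.Walk s t) : Prop :=
  ∀ s t : V, walkWeight G w (π s t) = gdist G w s t

/-- The edge weights are positive and finite on all edges of `G`. -/
def PosWeights {V : Type} (G : SimpleGraph V) (w : Sym2 V → ℝ≥0∞) : Prop :=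
  ∀ e ∈ G.edgeSet, 0 < w e ∧ w e ≠ ⊤

/-!
If both improvements were at most `k = ε W / 2`, the detour `s → a → x → b → t`, with the
`s`–`a` and `b`–`t` legs exact in `H₀` and the `a`–`x`, `x`–`b` legs at most `k` longer than the
walks `a →π y → x` and `x → y →π b` available in `H₁`, would have length at most
`d(s,t) + 2W + 2k = d(s,t) + (2 + ε) W`, contradicting the violation in `H₀`. The set-off bounds
hold because `a →π y` is a shortest path and `d(x,y) ≤ w(x,y) ≤ W`.
-/

namespace SimpleGraph

variable {V : Type} {G H : SimpleGraph V} (w : Sym2 V → ℝ≥0∞)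

lemma walkWeight_append {u v x : V} (p : G.Walk u v) (q : G.Walk v x) :
    walkWeight G w (p.append q) = walkWeight G w p + walkWeight G w q := by
  simp [walkWeight, Walk.edges_append]

lemma walkWeight_reverse {u v : V} (p : G.Walk u v) :
    walkWeight G w p.reverse = walkWeight G w p := by
  simp [walkWeight, Walk.edges_reverse, List.sum_reverse]

lemma gdist_le_walkWeight {u v : V} (p : G.Walk u v) : gdist G w u v ≤ walkWeight G w p :=
  iInf_le _ p

lemma gdist_le_walkWeight_of_edges_subset {u v : V} (p : G.Walk u v)
    (hp : ∀ e ∈ p.edges, e ∈ H.edgeSet) : gdist H w u v ≤ walkWeight G w p := by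
  refine (gdist_le_walkWeight w (p.transfer H hp)).trans_eq ?_
  simp [walkWeight, Walk.edges_transfer]

lemma gdist_le_of_adj {u v : V} (h : G.Adj u v) : gdist G w u v ≤ w s(u, v) :=
  (gdist_le_walkWeight w (Walk.cons h Walk.nil)).trans_eq (by simp [walkWeight])

lemma gdist_comm (u v : V) : gdist G w u v = gdist G w v u := by
  have key (a b : V) : gdist G w a b ≤ gdist G w b a :=
    le_iInf fun p => (gdist_le_walkWeight w p.reverse).trans_eq (walkWeight_reverse w p)
  exact le_antisymm (key u v) (key v u)

lemma gdist_triangle (u v x : V) :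
    gdist G w u x ≤ gdist G w u v + gdist G w v x := by
  unfold gdist
  rw [ENNReal.iInf_add]
  refine le_iInf fun p => ?_
  rw [ENNReal.add_iInf]
  exact le_iInf fun q =>
    (gdist_le_walkWeight w (p.append q)).trans_eq (walkWeight_append w p q)

lemma gdist_le_gdist_add_of_adj {u v x : V} (h : G.Adj v x) :
    gdist G w u x ≤ gdist G w u v + w s(v, x) :=
  (gdist_triangle w u v x).trans (add_le_add le_rfl (gdist_le_of_adj w h))

lemma gdist_le_walkWeight_add_of_adj {u v x : V} (p : G.Walk u v)
    (hp : ∀ e ∈ p.edges, e ∈ H.edgeSet) (h : H.Adj v x) :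
    gdist H w u x ≤ walkWeight G w p + w s(v, x) :=
  (gdist_le_gdist_add_of_adj w h).trans
    (add_le_add (gdist_le_walkWeight_of_edges_subset w p hp) le_rfl)

lemma gdist_add_le_gdist_add_two_mul {u v x : V} {W : ℝ≥0∞} (h : G.Adj v x)
    (hW : w s(v, x) ≤ W) : gdist G w u v + w s(v, x) ≤ gdist G w u x + 2 * W :=
  calc gdist G w u v + w s(v, x)
      ≤ gdist G w u x + w s(x, v) + W := by
        gcongr; exact gdist_le_gdist_add_of_adj w h.symm
    _ ≤ gdist G w u x + W + W := by rw [Sym2.eq_swap]; gcongr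
    _ = gdist G w u x + 2 * W := by ring

lemma mem_edgeSet_sup_fromEdgeSet {u v : V} (p : G.Walk u v) :
    ∀ e ∈ p.edges, e ∈ (H ⊔ fromEdgeSet {e | e ∈ p.edges}).edgeSet := fun e he => by
  rw [edgeSet_sup, edgeSet_fromEdgeSet]
  exact Or.inr ⟨he, G.not_isDiag_of_mem_edgeSet (p.edges_subset_edgeSet he)⟩

lemma walkWeight_le_gdist_of_append {u a b v : V} (p : G.Walk u a) (q : G.Walk a b)
    (r : G.Walk b v) (h : walkWeight G w (p.append (q.append r)) = gdist G w u v)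
    (hfin : gdist G w u v ≠ ⊤) : walkWeight G w q ≤ gdist G w a b := by
  rw [walkWeight_append, walkWeight_append] at h
  obtain ⟨hp, hqr⟩ := ENNReal.add_ne_top.mp (h ▸ hfin)
  have hr := (ENNReal.add_ne_top.mp hqr).2
  have key : walkWeight G w p + (walkWeight G w q + walkWeight G w r) ≤
      walkWeight G w p + (gdist G w a b + walkWeight G w r) :=
    calc _ = gdist G w u v := h
      _ ≤ gdist G w u a + (gdist G w a b + gdist G w b v) :=
        (gdist_triangle w u a v).trans (add_le_add le_rfl (gdist_triangle w a b v))
      _ ≤ _ := by gcongr <;> exact gdist_le_walkWeight w _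
  exact (ENNReal.add_le_add_iff_right hr).mp ((ENNReal.add_le_add_iff_left hp).mp key)

lemma lt_gdist_tsub_or_lt_gdist_tsub {H₀ H₁ : SimpleGraph V} {s a x b t : V} {k : ℝ≥0∞}
    (h : gdist H₀ w s a + gdist H₁ w a x + gdist H₁ w b x + gdist H₀ w b t + 2 * k <
      gdist H₀ w s t) :
    k < gdist H₀ w a x - gdist H₁ w a x ∨ k < gdist H₀ w b x - gdist H₁ w b x := by
  by_contra! hk
  have ha : gdist H₀ w a x ≤ gdist H₁ w a x + k := tsub_le_iff_left.mp hk.1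
  have hb : gdist H₀ w b x ≤ gdist H₁ w b x + k := tsub_le_iff_left.mp hk.2
  refine h.not_ge ?_
  calc gdist H₀ w s t
      ≤ gdist H₀ w s a + gdist H₀ w a x + (gdist H₀ w x b + gdist H₀ w b t) :=
        (gdist_triangle w s x t).trans
          (add_le_add (gdist_triangle w s a x) (gdist_triangle w x b t))
    _ ≤ gdist H₀ w s a + (gdist H₁ w a x + k) + (gdist H₁ w b x + k + gdist H₀ w b t) := by
        rw [gdist_comm w x b]
        gcongr
    _ = _ := by ring

end SimpleGraph

lemma ENNReal.two_mul_add_two_mul_ofReal_half_mul {ε : ℝ} (hε : 0 ≤ ε) (W : ℝ≥0∞) :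
    2 * W + 2 * (ENNReal.ofReal (ε / 2) * W) = ENNReal.ofReal (2 + ε) * W := by
  rw [ENNReal.ofReal_add zero_le_two hε, ← mul_assoc, ← ENNReal.ofReal_ofNat 2,
    ← ENNReal.ofReal_mul zero_le_two, mul_div_cancel₀ ε two_ne_zero, add_mul]

open SimpleGraph

theorem improvements_two_plus_eps_general
    (V : Type) (G : SimpleGraph V) (w : Sym2 V → ℝ≥0∞)
    (π : (s t : V) → G.Walk s t) (hπ : IsShortestPathScheme G w π)
    (s t : V) (ε : ℝ) (hε : 0 < ε)
    (H₀ H₁ : SimpleGraph V) (hH₀ : H₀ ≤ G)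
    (hviol : gdist H₀ w s t >
      gdist G w s t + ENNReal.ofReal (2 + ε) * maxEdge G w (π s t))
    (hH₁ : H₁ = H₀ ⊔ SimpleGraph.fromEdgeSet {e | e ∈ (π s t).edges})
    (a y b x : V)
    (p₁ : G.Walk s a) (p₂ : G.Walk a y) (p₃ : G.Walk y b) (p₄ : G.Walk b t)
    (horder : π s t = p₁.append (p₂.append (p₃.append p₄)))
    (hsa : gdist H₀ w s a = gdist G w s a)
    (hbt : gdist H₀ w b t = gdist G w b t)
    (hx : H₀.Adj x y ∧ w s(x, y) ≤ maxEdge G w (π s t)) :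
    (gdist H₁ w a x ≤ gdist G w a x + 2 * maxEdge G w (π s t) ∧
      gdist H₁ w b x ≤ gdist G w b x + 2 * maxEdge G w (π s t)) ∧
    (gdist H₀ w a x - gdist H₁ w a x > ENNReal.ofReal (ε / 2) * maxEdge G w (π s t) ∨
      gdist H₀ w b x - gdist H₁ w b x > ENNReal.ofReal (ε / 2) * maxEdge G w (π s t)) := by
  obtain ⟨hadj, hxyW⟩ := hx
  set W := maxEdge G w (π s t)
  have hyxW : w s(y, x) ≤ W := by rwa [Sym2.eq_swap]
  have hyx₁ : H₁.Adj y x := by rw [hH₁]; exact Or.inl hadj.symm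
  have hπ₁ : ∀ e ∈ (π s t).edges, e ∈ H₁.edgeSet := hH₁ ▸ mem_edgeSet_sup_fromEdgeSet (π s t)
  have hfin : gdist G w s t ≠ ⊤ := (le_self_add.trans_lt hviol).ne_top
  have hshort : walkWeight G w (π s t) = gdist G w s t := hπ s t
  rw [horder] at hshort hπ₁
  have hp₂ : walkWeight G w p₂ ≤ gdist G w a y :=
    walkWeight_le_gdist_of_append w p₁ p₂ _ hshort hfin
  have hp₃ : walkWeight G w p₃ ≤ gdist G w b y := by
    rw [Walk.append_assoc] at hshort
    exact (walkWeight_le_gdist_of_append w _ p₃ p₄ hshort hfin).trans_eq (gdist_comm w y b)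
  have hax : gdist H₁ w a x ≤ walkWeight G w p₂ + w s(y, x) :=
    gdist_le_walkWeight_add_of_adj w p₂ (fun e he => hπ₁ e (by simp [he])) hyx₁
  have hbx : gdist H₁ w b x ≤ walkWeight G w p₃ + w s(y, x) := by
    rw [← walkWeight_reverse]
    exact gdist_le_walkWeight_add_of_adj w p₃.reverse (fun e he => hπ₁ e (by simp_all)) hyx₁
  refine ⟨⟨?_, ?_⟩, lt_gdist_tsub_or_lt_gdist_tsub (s := s) (t := t) w ?_⟩
  · exact hax.trans ((add_le_add hp₂ le_rfl).trans
      (gdist_add_le_gdist_add_two_mul w (hH₀ hadj.symm) hyxW))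
  · exact hbx.trans ((add_le_add hp₃ le_rfl).trans
      (gdist_add_le_gdist_add_two_mul w (hH₀ hadj.symm) hyxW))
  calc _ ≤ walkWeight G w p₁ + (walkWeight G w p₂ + W) + (walkWeight G w p₃ + W) +
          walkWeight G w p₄ + 2 * (ENNReal.ofReal (ε / 2) * W) := by
        rw [hsa, hbt]
        gcongr ?_ + ?_ + ?_ + ?_ + _
        exacts [gdist_le_walkWeight w p₁, hax.trans (by gcongr), hbx.trans (by gcongr),
          gdist_le_walkWeight w p₄]
    _ = gdist G w s t + ENNReal.ofReal (2 + ε) * W := by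
        rw [← hshort, ← ENNReal.two_mul_add_two_mul_ofReal_half_mul hε.le]
        simp only [walkWeight_append]
        ring
    _ < gdist H₀ w s t := hviol

/-- Set-off/improvement lemma for `+(2+ε)W(·,·)` spanner completion.
`H₀` is a subgraph still violating the `+(2+ε)W(s,t)` bound for `(s,t)`, `H₁` is `H₀`
plus all edges of `π(s,t)`; `a, y, b` appear in this order along `π(s,t)`, with `s`–`a` and
`b`–`t` distances already exact in `H₀`, and `x` is joined in `H₀` to `y` by an edge of
weight at most `W(s,t)`. Then the pairs `(a,x)` and `(b,x)` are set off in `H₁`, and at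
least one of them improves by more than `ε·W(s,t)/2`. -/
theorem improvements_two_plus_eps
    (V : Type) [Fintype V] (G : SimpleGraph V) (w : Sym2 V → ℝ≥0∞)
    (hconn : G.Connected) (hw : PosWeights G w)
    (π : (s t : V) → G.Walk s t) (hπ : IsShortestPathScheme G w π)
    (s t : V) (ε : ℝ) (hε : 0 < ε)
    (H₀ H₁ : SimpleGraph V) (hH₀ : H₀ ≤ G)
    (hviol : gdist H₀ w s t >
      gdist G w s t + ENNReal.ofReal (2 + ε) * maxEdge G w (π s t))
    (hH₁ : H₁ = H₀ ⊔ SimpleGraph.fromEdgeSet {e | e ∈ (π s t).edges})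
    (a y b x : V)
    (p₁ : G.Walk s a) (p₂ : G.Walk a y) (p₃ : G.Walk y b) (p₄ : G.Walk b t)
    (horder : π s t = p₁.append (p₂.append (p₃.append p₄)))
    (hsa : gdist H₀ w s a = gdist G w s a)
    (hbt : gdist H₀ w b t = gdist G w b t)
    (hx : H₀.Adj x y ∧ w s(x, y) ≤ maxEdge G w (π s t)) :
    (gdist H₁ w a x ≤ gdist G w a x + 2 * maxEdge G w (π s t) ∧
      gdist H₁ w b x ≤ gdist G w b x + 2 * maxEdge G w (π s t)) ∧
    (gdist H₀ w a x - gdist H₁ w a x > ENNReal.ofReal (ε / 2) * maxEdge G w (π s t) ∨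
      gdist H₀ w b x - gdist H₁ w b x > ENNReal.ofReal (ε / 2) * maxEdge G w (π s t)) :=
  improvements_two_plus_eps_general V G w π hπ s t ε hε H₀ H₁ hH₀ hviol hH₁ a y b x p₁ p₂ p₃ p₄
    horder hsa hbt hx
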